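/- Let φ : G → T be a non-degenerate harmonic morphism from a graph G onto a tree T, and fix a vertex x₀ ∈ V(T). Then the pullback divisor D = Σ_{v ∈ V(G), φ(v) = x₀} m_φ(v)·(v) is an effective divisor on G of degree deg(φ) with rank r(D) ≥ 1. In particular, gon(G) ≤ deg(φ), and hence gon(G) ≤ ggon(G). -/

import Mathlib

/-- A finite loopless multigraph: a finite vertex type, a finite edge type,
and an assignment of an unordered pair of distinct endpoints to each edge. -/
structure Multigraph where
  V : Type
  E : Type
  [fintypeV : Fintype V]
  [fintypeE : Fintype E]
  [decEqV : DecidableEq V]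
  ends : E → Sym2 V
  loopless : ∀ e, ¬ (ends e).IsDiag

attribute [instance] Multigraph.fintypeV Multigraph.fintypeE Multigraph.decEqV

namespace Multigraph

/-- The graph obtained by deleting the edges in `W` is connected (finite graphs are
connected iff the vertex set is nonempty and every nonempty proper vertex subset
has an edge leaving it). -/
def ConnectedWithout (G : Multigraph) (W : Set G.E) : Prop :=
  Nonempty G.V ∧
    ∀ A : Finset G.V, A.Nonempty → A ≠ Finset.univ →
      ∃ e, e ∉ W ∧ ∃ u v, G.ends e = s(u, v) ∧ u ∈ A ∧ v ∉ A

/-- `G` is connected. -/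
def Connected (G : Multigraph) : Prop := G.ConnectedWithout ∅

/-- `G` is `k`-edge-connected: deleting any set of at most `k - 1` edges
leaves a connected graph. -/
def EdgeConnected (G : Multigraph) (k : ℕ) : Prop :=
  ∀ W : Finset G.E, W.card < k → G.ConnectedWithout ↑W

/-- An edge is a bridge if deleting it disconnects the graph. -/
def IsBridge (G : Multigraph) (e : G.E) : Prop := ¬ G.ConnectedWithout {e}

/-- The graph obtained by deleting the vertices in `U` (and all incident edges)
is connected. -/
def ConnectedAvoiding (G : Multigraph) (U : Set G.V) : Prop :=
  (∃ v, v ∉ U) ∧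
    ∀ A : Finset G.V, A.Nonempty → (∀ a ∈ A, a ∉ U) → (∃ w, w ∉ U ∧ w ∉ A) →
      ∃ e u v, G.ends e = s(u, v) ∧ u ∈ A ∧ v ∉ A ∧ v ∉ U

/-- `G` is `k`-vertex-connected: deleting any set of at most `k - 1` vertices
leaves a connected graph. -/
def VertexConnected (G : Multigraph) (k : ℕ) : Prop :=
  ∀ U : Finset G.V, U.card < k → G.ConnectedAvoiding ↑U

/-- `G` is simple: no two distinct edges have the same pair of endpoints. -/
def Simple (G : Multigraph) : Prop :=
  ∀ e e' : G.E, G.ends e = G.ends e' → e = e'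

/-- The genus `g(G) = |E| - |V| + 1`. -/
def genus (G : Multigraph) : ℤ :=
  (Fintype.card G.E : ℤ) - (Fintype.card G.V : ℤ) + 1

/-- A tree is a connected graph of genus 0. -/
def IsTree (G : Multigraph) : Prop := G.Connected ∧ G.genus = 0

/-- The number of edges joining `u` and `v`. -/
noncomputable def numEdges (G : Multigraph) (u v : G.V) : ℕ :=
  Set.ncard {e : G.E | G.ends e = s(u, v)}

/-- The valence of a vertex: the number of incident edges. -/
noncomputable def valence (G : Multigraph) (v : G.V) : ℕ :=
  Set.ncard {e : G.E | v ∈ G.ends e}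

/-- A divisor on `G`: an element of the free abelian group on `V(G)`. -/
abbrev Divisor (G : Multigraph) : Type := G.V → ℤ

/-- The degree of a divisor: the sum of its coefficients. -/
def degree (G : Multigraph) (D : G.Divisor) : ℤ := ∑ v, D v

/-- A divisor is effective if all its coefficients are nonnegative. -/
def Effective (G : Multigraph) (D : G.Divisor) : Prop := ∀ v, 0 ≤ D v

/-- The Laplacian of `G` applied to an integer vector `f`. -/
noncomputable def laplacian (G : Multigraph) (f : G.V → ℤ) : G.Divisor :=
  fun v => ∑ w, (G.numEdges v w : ℤ) * (f v - f w)

/-- Linear equivalence of divisors: the difference is in the image of the Laplacian. -/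
def LinEquiv (G : Multigraph) (D D' : G.Divisor) : Prop :=
  ∃ f : G.V → ℤ, D - D' = G.laplacian f

/-- `D - F` is equivalent to an effective divisor for every effective `F` of degree `k`. -/
def RankGe (G : Multigraph) (D : G.Divisor) (k : ℤ) : Prop :=
  ∀ F : G.Divisor, G.Effective F → G.degree F = k →
    ∃ E' : G.Divisor, G.Effective E' ∧ G.LinEquiv (D - F) E'

/-- The Baker–Norine rank of a divisor. -/
noncomputable def rank (G : Multigraph) (D : G.Divisor) : ℤ :=
  sSup {r : ℤ | r = -1 ∨ (0 ≤ r ∧ G.RankGe D r)}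

/-- The (divisorial) gonality of `G`: the minimum degree of an effective divisor
of rank at least 1. -/
noncomputable def gonality (G : Multigraph) : ℕ :=
  sInf {n : ℕ | ∃ D : G.Divisor, G.Effective D ∧ G.degree D = (n : ℤ) ∧ 1 ≤ G.rank D}

end Multigraph

/-- A morphism of multigraphs: vertices map to vertices, and each edge maps either
to an edge joining the images of its endpoints (if they are distinct) or to the
common image of its endpoints. -/
structure Morphism (G G' : Multigraph) where
  vertexMap : G.V → G'.V
  edgeMap : G.E → G'.E ⊕ G'.V
  map_edge_of_eq : ∀ e u v, G.ends e = s(u, v) → vertexMap u = vertexMap v →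
    edgeMap e = Sum.inr (vertexMap u)
  map_edge_of_ne : ∀ e u v, G.ends e = s(u, v) → vertexMap u ≠ vertexMap v →
    ∃ e', edgeMap e = Sum.inl e' ∧ G'.ends e' = s(vertexMap u, vertexMap v)

namespace Morphism

variable {G G' : Multigraph}

/-- The multiplicity `m_φ(v)` of `φ` at `v` with respect to an edge `e'` of `G'`. -/
noncomputable def mult (φ : Morphism G G') (v : G.V) (e' : G'.E) : ℕ :=
  Set.ncard {e : G.E | v ∈ G.ends e ∧ φ.edgeMap e = Sum.inl e'}

/-- `φ` is harmonic if `m_φ(v)` does not depend on the chosen edge `e'`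
incident to `φ(v)`. -/
def Harmonic (φ : Morphism G G') : Prop :=
  ∀ (v : G.V) (e₁ e₂ : G'.E),
    φ.vertexMap v ∈ G'.ends e₁ → φ.vertexMap v ∈ G'.ends e₂ →
      φ.mult v e₁ = φ.mult v e₂

/-- `φ` is non-degenerate if `m_φ(v) > 0` for every vertex `v`. -/
def Nondegenerate (φ : Morphism G G') : Prop :=
  ∀ (v : G.V) (e' : G'.E), φ.vertexMap v ∈ G'.ends e' → 0 < φ.mult v e'

/-- `φ` has degree `d`: every edge of `G'` has exactly `d` preimages. -/
def HasDegree (φ : Morphism G G') (d : ℕ) : Prop :=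
  Nonempty G'.E ∧ ∀ e' : G'.E, Set.ncard {e : G.E | φ.edgeMap e = Sum.inl e'} = d

end Morphism

/-! A harmonic morphism intertwines the Laplacians: `Δ_G (f ∘ φ) = φ^* (Δ_T f)`, where
`(φ^* D)(v) = m(v) D(φ v)`. In a tree, deleting an edge `xy` separates `x` from `y`, so the
Laplacian of the indicator of the side of `x` is `(x) - (y)`; hence any two vertices of `T` are
linearly equivalent, and so are their pullbacks. Thus for every `v ∈ V(G)` the divisor `D` is
equivalent to the fibre divisor over `φ(v)`, which contains `v` with multiplicity `m(v) ≥ 1`, and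
`r(D) ≥ 1`. Its degree is `d`: the preimages of an edge at `x₀` are counted by their endpoints
over `x₀`. -/

open Finset

namespace Multigraph

variable {G T : Multigraph}

/-- Junk value `v` when `v ∉ G.ends e`. -/
noncomputable def other (G : Multigraph) (v : G.V) (e : G.E) : G.V :=
  if h : v ∈ G.ends e then Sym2.Mem.other h else v

lemma ends_eq_iff_eq_other {v w : G.V} {e : G.E} (h : v ∈ G.ends e) :
    G.ends e = s(v, w) ↔ w = G.other v e := by
  rw [← Sym2.other_spec h, Sym2.congr_right, other, dif_pos h, eq_comm]

lemma laplacian_eq_sum_incident (f : G.V → ℤ) (v : G.V) :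
    G.laplacian f v = ∑ e, if v ∈ G.ends e then f v - f (G.other v e) else 0 := by
  have hnum : ∀ w, (G.numEdges v w : ℤ) * (f v - f w)
      = ∑ e, if G.ends e = s(v, w) then f v - f w else 0 := by
    intro w
    rw [← sum_filter, sum_const, nsmul_eq_mul, numEdges, ← Set.ncard_coe_finset]
    simp
  rw [laplacian, sum_congr rfl fun w _ => hnum w, sum_comm]
  refine sum_congr rfl fun e _ => ?_
  by_cases h : v ∈ G.ends e
  · simp_rw [if_pos h, ends_eq_iff_eq_other h, sum_ite_eq', if_pos (mem_univ _)]
  · rw [if_neg h]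
    exact sum_eq_zero fun w _ => if_neg fun he : G.ends e = s(v, w) => h (he ▸ Sym2.mem_mk_left v w)

lemma degree_laplacian (f : G.V → ℤ) : G.degree (G.laplacian f) = 0 := by
  have hsymm : ∀ v w, G.numEdges v w = G.numEdges w v := by
    intro v w
    simp only [numEdges, Sym2.eq_swap]
  -- the summand is antisymmetric in `(v, w)`
  have hS : ∑ v, ∑ w, (G.numEdges v w : ℤ) * (f v - f w)
      = -∑ v, ∑ w, (G.numEdges v w : ℤ) * (f v - f w) := by
    conv_lhs => rw [sum_comm]
    simp only [← sum_neg_distrib, hsymm]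
    exact sum_congr rfl fun _ _ => sum_congr rfl fun _ _ => by ring
  simp only [degree, laplacian]
  linarith

lemma degree_sub (D D' : G.Divisor) : G.degree (D - D') = G.degree D - G.degree D' :=
  sum_sub_distrib _ _

lemma degree_single (v : G.V) (k : ℤ) : G.degree (Pi.single v k) = k := by
  simp [degree]

lemma effective_single (v : G.V) {k : ℤ} (hk : 0 ≤ k) : G.Effective (Pi.single v k) := by
  intro w
  rw [Pi.single_apply]
  split_ifs <;> omega

lemma linEquiv_refl (D : G.Divisor) : G.LinEquiv D D :=
  ⟨0, by funext v; simp [laplacian]⟩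

lemma LinEquiv.trans {D₁ D₂ D₃ : G.Divisor} (h₁ : G.LinEquiv D₁ D₂) (h₂ : G.LinEquiv D₂ D₃) :
    G.LinEquiv D₁ D₃ := by
  obtain ⟨f, hf⟩ := h₁
  obtain ⟨g, hg⟩ := h₂
  refine ⟨f + g, funext fun v => ?_⟩
  have h := congr_fun (congrArg₂ (· + ·) hf hg) v
  simp only [Pi.add_apply, Pi.sub_apply, laplacian, ← sum_add_distrib] at h ⊢
  rw [← sub_add_sub_cancel, h]
  exact sum_congr rfl fun w _ => by ring

lemma LinEquiv.sub_right {D D' : G.Divisor} (h : G.LinEquiv D D') (F : G.Divisor) :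
    G.LinEquiv (D - F) (D' - F) := by
  simpa only [LinEquiv, sub_sub_sub_cancel_right] using h

lemma LinEquiv.degree_eq {D D' : G.Divisor} (h : G.LinEquiv D D') :
    G.degree D = G.degree D' := by
  obtain ⟨f, hf⟩ := h
  have := G.degree_laplacian f
  rw [← hf, degree_sub] at this
  omega

def toSimpleGraph (G : Multigraph) : SimpleGraph G.V :=
  SimpleGraph.fromEdgeSet (Set.range G.ends)

lemma toSimpleGraph_adj {u v : G.V} : G.toSimpleGraph.Adj u v ↔ ∃ e, G.ends e = s(u, v) := by
  refine ⟨fun h => h.1, fun ⟨e, he⟩ => ⟨⟨e, he⟩, fun huv => G.loopless e ?_⟩⟩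
  rw [he, huv]
  exact Sym2.mk_isDiag_iff.2 rfl

lemma edgeSet_toSimpleGraph : G.toSimpleGraph.edgeSet = Set.range G.ends := by
  rw [toSimpleGraph, SimpleGraph.edgeSet_fromEdgeSet, sdiff_eq_left, Set.disjoint_left]
  rintro _ ⟨e, rfl⟩
  exact G.loopless e

lemma Connected.toSimpleGraph (hG : G.Connected) : G.toSimpleGraph.Connected := by
  classical
  have : Nonempty G.V := hG.1
  refine ⟨fun x z => ?_⟩
  by_contra hz
  set A := univ.filter (G.toSimpleGraph.Reachable x)
  have hx : x ∈ A := by simp [A]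
  have hA : A ≠ univ := fun h => hz (mem_filter.1 (h ▸ mem_univ z : z ∈ A)).2
  obtain ⟨e, -, u, v, he, hu, hv⟩ := hG.2 A ⟨x, hx⟩ hA
  simp only [A, mem_filter, mem_univ, true_and] at hu hv
  exact hv (hu.trans (toSimpleGraph_adj.2 ⟨e, he⟩).reachable)

lemma Connected.exists_mem_ends (hG : G.Connected) (e₀ : G.E) (v : G.V) : ∃ e, v ∈ G.ends e := by
  obtain ⟨a, b, hab⟩ := Sym2.exists.1 ⟨G.ends e₀, rfl⟩
  have : Nontrivial G.V := ⟨⟨a, b, (toSimpleGraph_adj.2 ⟨e₀, hab⟩).ne⟩⟩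
  obtain ⟨u, hu⟩ := hG.toSimpleGraph.preconnected.exists_adj_of_nontrivial v
  obtain ⟨e, he⟩ := toSimpleGraph_adj.1 hu
  exact ⟨e, he ▸ Sym2.mem_mk_left v u⟩

lemma IsTree.ncard_range_ends (hT : T.IsTree) :
    (Set.range T.ends).ncard = Fintype.card T.E := by
  have hle : (Set.range T.ends).ncard ≤ Fintype.card T.E := by
    rw [← Set.image_univ, ← Nat.card_eq_fintype_card, ← Set.ncard_univ]
    exact Set.ncard_image_le
  have hge := hT.1.toSimpleGraph.card_vert_le_card_edgeSet_add_one
  rw [Nat.card_coe_set_eq, edgeSet_toSimpleGraph, Nat.card_eq_fintype_card] at hge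
  have hgenus := hT.2
  rw [genus] at hgenus
  omega

lemma IsTree.injective_ends (hT : T.IsTree) : Function.Injective T.ends := by
  rw [← Set.injOn_univ]
  refine Set.injOn_of_ncard_image_eq ?_ Set.finite_univ
  rw [Set.image_univ, hT.ncard_range_ends, Set.ncard_univ, Nat.card_eq_fintype_card]

lemma IsTree.isTree_toSimpleGraph (hT : T.IsTree) : T.toSimpleGraph.IsTree := by
  rw [SimpleGraph.isTree_iff_connected_and_card, Nat.card_coe_set_eq, edgeSet_toSimpleGraph,
    hT.ncard_range_ends, Nat.card_eq_fintype_card]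
  have hgenus := hT.2
  rw [genus] at hgenus
  exact ⟨hT.1.toSimpleGraph, by omega⟩

/-- Take `A` to be the component of `x` in `T - e'`; it misses `y` since every edge of a tree
is a bridge. -/
lemma IsTree.exists_set_crossed_only_by (hT : T.IsTree) {e' : T.E} {x y : T.V}
    (h : T.ends e' = s(x, y)) :
    ∃ A : Set T.V, x ∈ A ∧ y ∉ A ∧
      ∀ e, e ≠ e' → ∀ a b, T.ends e = s(a, b) → a ∈ A → b ∈ A := by
  set H := T.toSimpleGraph.deleteEdges {s(x, y)}
  have hbridge := SimpleGraph.isAcyclic_iff_forall_adj_isBridge.1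
    hT.isTree_toSimpleGraph.isAcyclic (toSimpleGraph_adj.2 ⟨e', h⟩)
  refine ⟨{z | H.Reachable x z}, SimpleGraph.Reachable.refl x, hbridge, ?_⟩
  intro e he a b hab ha
  refine ha.trans (SimpleGraph.Adj.reachable ?_)
  refine ⟨toSimpleGraph_adj.2 ⟨e, hab⟩, fun hxy => he (hT.injective_ends ?_)⟩
  rw [hab, h]
  exact ((SimpleGraph.fromEdgeSet_adj _).1 hxy).1

lemma laplacian_indicator_of_crossed_only_by {A : Set G.V} {e' : G.E} {x y : G.V}
    (h : G.ends e' = s(x, y)) (hx : x ∈ A) (hy : y ∉ A)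
    (hA : ∀ e, e ≠ e' → ∀ a b, G.ends e = s(a, b) → a ∈ A → b ∈ A) [DecidablePred (· ∈ A)] :
    G.laplacian (fun z => if z ∈ A then 1 else 0) = Pi.single x 1 - Pi.single y 1 := by
  have hxy : x ≠ y := by rintro rfl; exact hy hx
  funext z
  rw [laplacian_eq_sum_incident, sum_eq_single e']
  · by_cases hzx : z = x
    · subst hzx
      have hmem : z ∈ G.ends e' := h ▸ Sym2.mem_mk_left z y
      rw [if_pos hmem, ← (ends_eq_iff_eq_other hmem).1 h]
      simp [hx, hy, hxy]
    by_cases hzy : z = y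
    · subst hzy
      have hmem : z ∈ G.ends e' := h ▸ Sym2.mem_mk_right x z
      rw [if_pos hmem, ← (ends_eq_iff_eq_other hmem).1 (h.trans Sym2.eq_swap)]
      simp [hx, hy, hzx]
    · have hmem : z ∉ G.ends e' := by rw [h, Sym2.mem_iff]; tauto
      simp [hmem, hzx, hzy]
  · intro e _ he
    by_cases hz : z ∈ G.ends e
    · have hends := (ends_eq_iff_eq_other hz).2 rfl
      have hiff : z ∈ A ↔ G.other z e ∈ A :=
        ⟨hA e he _ _ hends, hA e he _ _ (hends.trans Sym2.eq_swap)⟩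
      rw [if_pos hz, if_congr hiff rfl rfl, sub_self]
    · rw [if_neg hz]
  · simp

lemma IsTree.linEquiv_single (hT : T.IsTree) (x y : T.V) :
    T.LinEquiv (Pi.single x 1) (Pi.single y 1) := by
  classical
  have hadj : ∀ a b, T.toSimpleGraph.Adj a b → T.LinEquiv (Pi.single a 1) (Pi.single b 1) := by
    rintro a b hab
    obtain ⟨e', he'⟩ := toSimpleGraph_adj.1 hab
    obtain ⟨A, ha, hb, hA⟩ := hT.exists_set_crossed_only_by he'
    exact ⟨_, (laplacian_indicator_of_crossed_only_by he' ha hb hA).symm⟩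
  have hreach :=
    (SimpleGraph.reachable_iff_reflTransGen x y).1 (hT.1.toSimpleGraph.preconnected x y)
  induction hreach with
  | refl => exact linEquiv_refl _
  | tail _ hab ih => exact ih.trans (hadj _ _ hab)

lemma eq_single_of_effective_of_degree_eq_one {F : G.Divisor} (hF : G.Effective F)
    (hdeg : G.degree F = 1) : ∃ v, F = Pi.single v 1 := by
  obtain ⟨v, -, hv⟩ : ∃ v ∈ univ, (0 : ℤ) < F v :=
    exists_lt_of_sum_lt (by rw [sum_const_zero, ← degree, hdeg]; exact zero_lt_one)
  have hsplit := add_sum_erase univ F (mem_univ v)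
  have hrest : 0 ≤ ∑ w ∈ univ.erase v, F w := sum_nonneg fun w _ => hF w
  rw [show ∑ w, F w = 1 from hdeg] at hsplit
  have hrest_zero :=
    (sum_eq_zero_iff_of_nonneg fun w _ => hF w).1 (by omega : ∑ w ∈ univ.erase v, F w = 0)
  refine ⟨v, funext fun w => ?_⟩
  by_cases hw : w = v
  · subst hw
    rw [Pi.single_eq_same]
    omega
  · rw [Pi.single_eq_of_ne hw, hrest_zero w (mem_erase.2 ⟨hw, mem_univ w⟩)]

lemma rankGe_one_of_forall_single {D : G.Divisor}
    (h : ∀ v, ∃ E, G.Effective E ∧ G.LinEquiv (D - Pi.single v 1) E) : G.RankGe D 1 := by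
  intro F hF hdeg
  obtain ⟨v, rfl⟩ := eq_single_of_effective_of_degree_eq_one hF hdeg
  exact h v

lemma le_rank_of_rankGe [Nonempty G.V] {D : G.Divisor} {k : ℤ} (hk : 0 ≤ k)
    (h : G.RankGe D k) : k ≤ G.rank D := by
  refine le_csSup ⟨max (-1) (G.degree D), ?_⟩ (Or.inr ⟨hk, h⟩)
  rintro r (rfl | ⟨hr, hrank⟩)
  · exact le_max_left _ _
  · obtain ⟨v⟩ := ‹Nonempty G.V›
    obtain ⟨E, hE, hequiv⟩ :=
      hrank (Pi.single v r) (G.effective_single v hr) (degree_single v r)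
    have hdegE := hequiv.degree_eq
    rw [degree_sub, degree_single] at hdegE
    have : 0 ≤ G.degree E := sum_nonneg fun w _ => hE w
    exact le_max_of_le_right (by linarith)

end Multigraph

namespace Morphism

open scoped Classical

variable {G T : Multigraph} (φ : Morphism G T)

def HasMultiplicity (m : G.V → ℕ) : Prop :=
  ∀ (v : G.V) (e' : T.E), φ.vertexMap v ∈ T.ends e' → φ.mult v e' = m v

def pullback (m : G.V → ℕ) (D : T.Divisor) : G.Divisor :=
  fun v => m v * D (φ.vertexMap v)

lemma pullback_sub (m : G.V → ℕ) (D D' : T.Divisor) :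
    φ.pullback m (D - D') = φ.pullback m D - φ.pullback m D' := by
  funext v
  simp [pullback, mul_sub]

lemma ends_of_edgeMap_eq_inl {e : G.E} {e' : T.E} (h : φ.edgeMap e = Sum.inl e') {u w : G.V}
    (hends : G.ends e = s(u, w)) : T.ends e' = s(φ.vertexMap u, φ.vertexMap w) := by
  by_cases heq : φ.vertexMap u = φ.vertexMap w
  · simp [φ.map_edge_of_eq e u w hends heq] at h
  · obtain ⟨e'', h₁, h₂⟩ := φ.map_edge_of_ne e u w hends heq
    rw [h, Sum.inl.injEq] at h₁
    rwa [h₁]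

lemma mult_eq_card (v : G.V) (e' : T.E) :
    φ.mult v e' = #{e | v ∈ G.ends e ∧ φ.edgeMap e = Sum.inl e'} := by
  rw [mult, ← Set.ncard_coe_finset]
  simp

lemma mult_eq_zero_of_notMem {v : G.V} {e' : T.E} (hv : φ.vertexMap v ∉ T.ends e') :
    φ.mult v e' = 0 := by
  rw [mult, Set.ncard_eq_zero]
  ext e
  simp only [Set.mem_ofPred_eq, Set.mem_empty_iff_false, iff_false, not_and]
  intro hve he
  exact hv (φ.ends_of_edgeMap_eq_inl he ((G.ends_eq_iff_eq_other hve).2 rfl) ▸ Sym2.mem_mk_left _ _)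

lemma laplacian_comp {m : G.V → ℕ} (hm : φ.HasMultiplicity m) (f : T.V → ℤ) :
    G.laplacian (f ∘ φ.vertexMap) = φ.pullback m (T.laplacian f) := by
  funext v
  set g : T.E → ℤ := fun e' => f (φ.vertexMap v) - f (T.other (φ.vertexMap v) e')
  -- an edge at `v` contributes nothing if contracted, and `g e'` if mapped onto `e'`
  have hedge : ∀ e, (if v ∈ G.ends e then f (φ.vertexMap v) - f (φ.vertexMap (G.other v e))
      else 0) = ∑ e', if v ∈ G.ends e ∧ φ.edgeMap e = Sum.inl e' then g e' else 0 := by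
    intro e
    by_cases hv : v ∈ G.ends e
    · have hends := (G.ends_eq_iff_eq_other hv).2 rfl
      simp only [hv, true_and, if_true]
      rcases hφe : φ.edgeMap e with e'₀ | t
      · have hT := φ.ends_of_edgeMap_eq_inl hφe hends
        have hmem : φ.vertexMap v ∈ T.ends e'₀ := hT ▸ Sym2.mem_mk_left _ _
        simp only [Sum.inl.injEq, sum_ite_eq, mem_univ, if_true, g,
          ← (T.ends_eq_iff_eq_other hmem).1 hT]
      · have heq : φ.vertexMap v = φ.vertexMap (G.other v e) := by
          by_contra hne
          obtain ⟨_, h, -⟩ := φ.map_edge_of_ne e _ _ hends hne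
          rw [hφe] at h
          exact Sum.inr_ne_inl h
        simp [heq]
    · simp [hv]
  simp only [Multigraph.laplacian_eq_sum_incident, Function.comp_apply, pullback]
  rw [sum_congr rfl fun e _ => hedge e, sum_comm, mul_sum]
  refine sum_congr rfl fun e' _ => ?_
  rw [sum_ite, sum_const_zero, add_zero, sum_const, nsmul_eq_mul, ← mult_eq_card]
  by_cases hv : φ.vertexMap v ∈ T.ends e'
  · rw [hm v e' hv, if_pos hv]
  · rw [φ.mult_eq_zero_of_notMem hv, if_neg hv, Nat.cast_zero, zero_mul, mul_zero]

lemma linEquiv_pullback {m : G.V → ℕ} (hm : φ.HasMultiplicity m) {D D' : T.Divisor}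
    (h : T.LinEquiv D D') : G.LinEquiv (φ.pullback m D) (φ.pullback m D') := by
  obtain ⟨f, hf⟩ := h
  exact ⟨f ∘ φ.vertexMap, by rw [φ.laplacian_comp hm, ← hf, pullback_sub]⟩

lemma card_endpoints_over {e : G.E} {e' : T.E} (h : φ.edgeMap e = Sum.inl e') {x : T.V}
    (hx : x ∈ T.ends e') : #{v | v ∈ G.ends e ∧ φ.vertexMap v = x} = 1 := by
  obtain ⟨u, w, hends⟩ := Sym2.exists.1 ⟨G.ends e, rfl⟩
  have hT := φ.ends_of_edgeMap_eq_inl h hends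
  have hne : φ.vertexMap u ≠ φ.vertexMap w := fun heq =>
    T.loopless e' (by rw [hT, heq]; exact Sym2.mk_isDiag_iff.2 rfl)
  rw [hT, Sym2.mem_iff] at hx
  rw [card_eq_one]
  rcases hx with rfl | rfl
  · exact ⟨u, by ext v; simp only [hends, Sym2.mem_iff, mem_filter, mem_univ, mem_singleton]; grind⟩
  · exact ⟨w, by ext v; simp only [hends, Sym2.mem_iff, mem_filter, mem_univ, mem_singleton]; grind⟩

lemma degree_pullback_single {m : G.V → ℕ} (hm : φ.HasMultiplicity m) {d : ℕ}
    (hdeg : φ.HasDegree d) {x : T.V} {e' : T.E} (hx : x ∈ T.ends e') :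
    G.degree (φ.pullback m (Pi.single x 1)) = d := by
  have hcount := sum_card_bipartiteAbove_eq_sum_card_bipartiteBelow (fun v e => v ∈ G.ends e)
    (s := {v | φ.vertexMap v = x}) (t := {e | φ.edgeMap e = Sum.inl e'})
  have hfiber : ∀ v ∈ ({v | φ.vertexMap v = x} : Finset G.V),
      #(bipartiteAbove (fun v e => v ∈ G.ends e) {e | φ.edgeMap e = Sum.inl e'} v) = m v := by
    intro v hv
    rw [mem_filter] at hv
    rw [← hm v e' (hv.2 ▸ hx), mult_eq_card, bipartiteAbove, filter_filter]
    simp only [and_comm]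
  have hedge : ∀ e ∈ ({e | φ.edgeMap e = Sum.inl e'} : Finset G.E),
      #(bipartiteBelow (fun v e => v ∈ G.ends e) {v | φ.vertexMap v = x} e) = 1 := by
    intro e he
    rw [mem_filter] at he
    rw [← φ.card_endpoints_over he.2 hx, bipartiteBelow, filter_filter]
    simp only [and_comm]
  rw [sum_congr rfl hfiber, sum_congr rfl hedge, sum_const, smul_eq_mul, mul_one] at hcount
  have ht : #({e | φ.edgeMap e = Sum.inl e'} : Finset G.E) = d := by
    rw [← hdeg.2 e', ← Set.ncard_coe_finset]
    simp
  simp only [Multigraph.degree, pullback, Pi.single_apply, mul_ite, mul_one, mul_zero]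
  rw [← sum_filter]
  exact_mod_cast hcount.trans ht

lemma one_le_of_nondegenerate (hnd : φ.Nondegenerate) {m : G.V → ℕ} (hm : φ.HasMultiplicity m)
    {v : G.V} {e' : T.E} (hv : φ.vertexMap v ∈ T.ends e') : 1 ≤ m v :=
  hm v e' hv ▸ hnd v e' hv

lemma effective_pullback_single (m : G.V → ℕ) (x : T.V) :
    G.Effective (φ.pullback m (Pi.single x 1)) := fun v =>
  mul_nonneg (Nat.cast_nonneg _) (T.effective_single x zero_le_one (φ.vertexMap v))

lemma effective_pullback_single_sub_single {m : G.V → ℕ} {v : G.V} (hv : 1 ≤ m v) :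
    G.Effective (φ.pullback m (Pi.single (φ.vertexMap v) 1) - Pi.single v 1) := by
  intro w
  by_cases hw : w = v
  · subst hw
    simp only [Pi.sub_apply, pullback, Pi.single_eq_same, mul_one, sub_nonneg]
    exact_mod_cast hv
  · rw [Pi.sub_apply, Pi.single_eq_of_ne hw, sub_zero]
    exact φ.effective_pullback_single m _ w

end Morphism

theorem stmt_18_general (G T : Multigraph) (hG : G.Connected) (hT : T.IsTree)
    (φ : Morphism G T) (hnd : φ.Nondegenerate)
    (d : ℕ) (hdeg : φ.HasDegree d)
    (m : G.V → ℕ)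
    (hm : ∀ (v : G.V) (e' : T.E), φ.vertexMap v ∈ T.ends e' → φ.mult v e' = m v)
    (x₀ : T.V)
    (D : G.Divisor)
    (hD : D = fun v => if φ.vertexMap v = x₀ then (m v : ℤ) else 0) :
    G.Effective D ∧ G.degree D = (d : ℤ) ∧ 1 ≤ G.rank D ∧ G.gonality ≤ d := by
  have hDpull : D = φ.pullback m (Pi.single x₀ 1) := by
    subst hD
    funext v
    simp [Morphism.pullback, Pi.single_apply]
  obtain ⟨e₀⟩ := hdeg.1
  have heff : G.Effective D := hDpull ▸ φ.effective_pullback_single m x₀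
  have hdegD : G.degree D = d := by
    obtain ⟨_, hx₀⟩ := hT.1.exists_mem_ends e₀ x₀
    exact hDpull ▸ φ.degree_pullback_single hm hdeg hx₀
  have hrank : 1 ≤ G.rank D := by
    have := hG.1
    refine G.le_rank_of_rankGe zero_le_one (G.rankGe_one_of_forall_single fun v => ?_)
    obtain ⟨_, hv⟩ := hT.1.exists_mem_ends e₀ (φ.vertexMap v)
    -- `D` is equivalent to the fibre divisor over `φ v`, which contains `v`
    refine ⟨_, φ.effective_pullback_single_sub_single (φ.one_le_of_nondegenerate hnd hm hv), ?_⟩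
    rw [hDpull]
    exact (φ.linEquiv_pullback hm (hT.linEquiv_single x₀ (φ.vertexMap v))).sub_right _
  exact ⟨heff, hdegD, hrank, Nat.sInf_le ⟨D, heff, hdegD, hrank⟩⟩

/-- Let `φ : G → T` be a non-degenerate harmonic morphism of
degree `d` onto a tree `T` (with common multiplicities `m v = m_φ(v)`), and fix
`x₀ ∈ V(T)`. Then the pullback divisor `D = Σ_{φ(v) = x₀} m_φ(v)·(v)` is effective
of degree `d = deg(φ)` and has rank at least 1. In particular `gon(G) ≤ deg(φ)`,
and hence `gon(G) ≤ ggon(G)`. -/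
theorem stmt_18 (G T : Multigraph) (hG : G.Connected) (hT : T.IsTree)
    (φ : Morphism G T) (hharm : φ.Harmonic) (hnd : φ.Nondegenerate)
    (d : ℕ) (hdeg : φ.HasDegree d)
    (m : G.V → ℕ)
    (hm : ∀ (v : G.V) (e' : T.E), φ.vertexMap v ∈ T.ends e' → φ.mult v e' = m v)
    (x₀ : T.V)
    (D : G.Divisor)
    (hD : D = fun v => if φ.vertexMap v = x₀ then (m v : ℤ) else 0) :
    G.Effective D ∧ G.degree D = (d : ℤ) ∧ 1 ≤ G.rank D ∧ G.gonality ≤ d :=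
  stmt_18_general G T hG hT φ hnd d hdeg m hm x₀ D hD
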